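/- Let H be a real n×n matrix with HᵀH = I, let μ ≥ 0 and x, y ∈ ℝⁿ. Then ‖N_μ(x) − y‖² ≤ ‖x − y‖² − 2μ(‖H N_μ(x)‖₁ − ‖Hy‖₁) + 3μ²n. -/

import Mathlib

open Filter Topology Matrix

/-- The soft-thresholding operator with threshold `μ`. -/
noncomputable def softThresh {n : ℕ} (μ : ℝ) (v : EuclideanSpace ℝ (Fin n)) :
    EuclideanSpace ℝ (Fin n) :=
  WithLp.toLp 2 (fun i => if v i < -μ then v i + μ else if μ < v i then v i - μ else 0)

/-- Multiplication of a Euclidean vector by a matrix. -/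
noncomputable def matVec {n : ℕ} (H : Matrix (Fin n) (Fin n) ℝ)
    (x : EuclideanSpace ℝ (Fin n)) : EuclideanSpace ℝ (Fin n) :=
  (WithLp.equiv 2 (Fin n → ℝ)).symm (H.mulVec ((WithLp.equiv 2 (Fin n → ℝ)) x))

/-- The transformed soft-thresholding operator `N_μ(x) = Hᵀ ST_μ (H x)`. -/
noncomputable def haarProx {n : ℕ} (H : Matrix (Fin n) (Fin n) ℝ) (μ : ℝ)
    (x : EuclideanSpace ℝ (Fin n)) : EuclideanSpace ℝ (Fin n) :=
  matVec Hᵀ (softThresh μ (matVec H x))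

/-- The 1-norm of a vector. -/
noncomputable def norm1 {n : ℕ} (u : EuclideanSpace ℝ (Fin n)) : ℝ :=
  ∑ i, |u i|

/-!
Since `H` is orthogonal, passing to the coordinates `u = H x`, `z = H y` preserves the
Euclidean norms, and `H N_μ(x) = ST_μ(u)`. The inequality then splits into `n` scalar
inequalities `(ST_μ(uᵢ) - zᵢ)² ≤ (uᵢ - zᵢ)² - 2μ(|ST_μ(uᵢ)| - |zᵢ|) + 3μ²`, one for each
coordinate, which follow by distinguishing the three branches of soft thresholding.
-/

section MatVec

variable {n : ℕ}

lemma matVec_matVec (A B : Matrix (Fin n) (Fin n) ℝ) (x : EuclideanSpace ℝ (Fin n)) :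
    matVec A (matVec B x) = matVec (A * B) x := by
  simp [matVec, mulVec_mulVec]

lemma matVec_one (x : EuclideanSpace ℝ (Fin n)) : matVec 1 x = x := by
  simp [matVec]

lemma matVec_sub (A : Matrix (Fin n) (Fin n) ℝ) (x y : EuclideanSpace ℝ (Fin n)) :
    matVec A (x - y) = matVec A x - matVec A y := by
  ext i
  simp [matVec, mulVec_sub]

lemma norm_matVec_of_transpose_mul_self {A : Matrix (Fin n) (Fin n) ℝ} (hA : Aᵀ * A = 1)
    (v : EuclideanSpace ℝ (Fin n)) : ‖matVec A v‖ = ‖v‖ := by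
  rw [← sq_eq_sq₀ (norm_nonneg _) (norm_nonneg _), ← real_inner_self_eq_norm_sq,
    ← real_inner_self_eq_norm_sq]
  simp only [matVec, EuclideanSpace.inner_eq_star_dotProduct, star_trivial]
  simp [dotProduct_mulVec, ← mulVec_transpose, hA]

end MatVec

section SoftThresh

variable {n : ℕ} {μ : ℝ}

lemma sq_softThresh_sub_le (hμ : 0 ≤ μ) (v z : EuclideanSpace ℝ (Fin n)) (i : Fin n) :
    (softThresh μ v i - z i) ^ 2
      ≤ (v i - z i) ^ 2 - 2 * μ * (|softThresh μ v i| - |z i|) + 3 * μ ^ 2 := by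
  have hz₁ := neg_abs_le (z i)
  have hz₂ := le_abs_self (z i)
  simp only [softThresh, PiLp.toLp_apply]
  split_ifs with hlow hhigh
  · rw [abs_of_nonpos (by linarith)]
    nlinarith
  · rw [abs_of_nonneg (by linarith)]
    nlinarith
  · rw [abs_zero]
    nlinarith [not_lt.mp hlow, not_lt.mp hhigh]

theorem norm_softThresh_sub_sq_le (hμ : 0 ≤ μ) (v z : EuclideanSpace ℝ (Fin n)) :
    ‖softThresh μ v - z‖ ^ 2
      ≤ ‖v - z‖ ^ 2 - 2 * μ * (norm1 (softThresh μ v) - norm1 z) + 3 * μ ^ 2 * n := by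
  simp only [EuclideanSpace.real_norm_sq_eq, norm1, PiLp.sub_apply]
  calc ∑ i, (softThresh μ v i - z i) ^ 2
      ≤ ∑ i, ((v i - z i) ^ 2 - 2 * μ * (|softThresh μ v i| - |z i|) + 3 * μ ^ 2) :=
        Finset.sum_le_sum fun i _ => sq_softThresh_sub_le hμ v z i
    _ = _ := by
        simp only [Finset.sum_add_distrib, Finset.sum_sub_distrib, ← Finset.mul_sum,
          Finset.sum_const, Finset.card_univ, Fintype.card_fin, nsmul_eq_mul]
        ring

end SoftThresh

/-- The optimality-operator inequality for the transformed soft-thresholding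
operator `N_μ`. -/
theorem haar_soft_threshold_descent {n : ℕ}
    (H : Matrix (Fin n) (Fin n) ℝ) (hH : Hᵀ * H = 1)
    (μ : ℝ) (hμ : 0 ≤ μ) (x y : EuclideanSpace ℝ (Fin n)) :
    ‖haarProx H μ x - y‖ ^ 2
      ≤ ‖x - y‖ ^ 2
        - 2 * μ * (norm1 (matVec H (haarProx H μ x)) - norm1 (matVec H y))
        + 3 * μ ^ 2 * (n : ℝ) := by
  have hHHt : H * Hᵀ = 1 := mul_eq_one_comm.mp hH
  have hHt : Hᵀᵀ * Hᵀ = 1 := by rwa [transpose_transpose]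
  have h_coord : matVec H (haarProx H μ x) = softThresh μ (matVec H x) := by
    rw [haarProx, matVec_matVec, hHHt, matVec_one]
  have h_diff : haarProx H μ x - y = matVec Hᵀ (softThresh μ (matVec H x) - matVec H y) := by
    rw [matVec_sub, matVec_matVec, hH, matVec_one, haarProx]
  rw [h_coord, h_diff, norm_matVec_of_transpose_mul_self hHt,
    ← norm_matVec_of_transpose_mul_self hH (x - y), matVec_sub]
  exact norm_softThresh_sub_sq_le hμ _ _
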